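/- arXiv:math/0212036 — 2 statements merged into one kernel-verified Lean document; each statement's English description precedes it below -/
import Mathlib

section
/- Let B and C be rings and M a (B,C)-bimodule such that the canonical ring homomorphisms B → End_{C^op}(M) and C → (End_B M)^op are both isomorphisms. Then the center Z(B) is canonically isomorphic to the center Z(C): explicitly, for each z ∈ Z(B) there is a unique z' ∈ Z(C) with z·m = m·z' for all m ∈ M, and z ↦ z' is a ring isomorphism Z(B) ≅ Z(C). -/
open MulOpposite

section Aux

variable (B C M : Type*) [Ring B] [Ring C] [AddCommGroup M]
    [Module B M] [Module Cᵐᵒᵖ M] [SMulCommClass B Cᵐᵒᵖ M]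

variable {B C M}

/-- right multiplication by `c` as a `B`-linear map -/
def rmul (c : C) : M →ₗ[B] M where
  toFun m := op c • m
  map_add' := smul_add _
  map_smul' b m := (smul_comm b (op c) m).symm

/-- left multiplication by a central `z` as a `B`-linear map -/
def lmulc (z : Subring.center B) : M →ₗ[B] M where
  toFun m := (z : B) • m
  map_add' := smul_add _
  map_smul' b m := by
    simp only [RingHom.id_apply, ← mul_smul]
    rw [(Subring.mem_center_iff.mp z.2 b).symm]

/-- left multiplication by `b` as a `Cᵐᵒᵖ`-linear map -/
def lmul (b : B) : M →ₗ[Cᵐᵒᵖ] M where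
  toFun m := b • m
  map_add' := smul_add _
  map_smul' c m := smul_comm b c m

/-- right multiplication by a central `w` as a `Cᵐᵒᵖ`-linear map -/
def rmulc (w : Subring.center C) : M →ₗ[Cᵐᵒᵖ] M where
  toFun m := op (w : C) • m
  map_add' := smul_add _
  map_smul' c m := by
    have h : op (w : C) * c = c * op (w : C) := by
      rw [← op_unop c, ← op_mul, ← op_mul, Subring.mem_center_iff.mp w.2 (unop c)]
    simp only [RingHom.id_apply, ← mul_smul, h]

end Aux

/-- Double centralizer property gives an isomorphism of centers.
`M` is a `(B,C)`-bimodule (left `B`-module, right `C`-module, actions commuting).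
The hypotheses `hB`, `hC` say that the canonical maps `B → End_{C^op}(M)` and
`C → (End_B M)^op` are bijective: every right-`C`-linear endomorphism is left
multiplication by a unique `b : B`, and every left-`B`-linear endomorphism is right
multiplication by a unique `c : C`.  Conclusion: there is a ring isomorphism
`Z(B) ≅ Z(C)`, where `e z` is the unique central element of `C` with
`z • m = m • (e z)` for all `m`. -/
theorem center_iso_of_double_centralizer
    (B C M : Type*) [Ring B] [Ring C] [AddCommGroup M]
    [Module B M] [Module Cᵐᵒᵖ M] [SMulCommClass B Cᵐᵒᵖ M]
    (hB : ∀ f : M →ₗ[Cᵐᵒᵖ] M, ∃! b : B, ∀ m : M, f m = b • m)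
    (hC : ∀ g : M →ₗ[B] M, ∃! c : C, ∀ m : M, g m = MulOpposite.op c • m) :
    ∃ e : Subring.center B ≃+* Subring.center C,
      (∀ (z : Subring.center B) (m : M),
        (z : B) • m = MulOpposite.op ((e z : C)) • m) ∧
      (∀ (z : Subring.center B) (c : C), c ∈ Subring.center C →
        (∀ m : M, (z : B) • m = MulOpposite.op c • m) → c = (e z : C)) := by
  -- faithfulness of both actions
  have faithC : ∀ c₁ c₂ : C, (∀ m : M, op c₁ • m = op c₂ • m) → c₁ = c₂ := by
    intro c₁ c₂ h
    obtain ⟨c, -, hu⟩ := hC (rmul c₁ : M →ₗ[B] M)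
    have h1 : c₁ = c := hu c₁ fun m => rfl
    have h2 : c₂ = c := hu c₂ fun m => h m
    rw [h1, h2]
  have faithB : ∀ b₁ b₂ : B, (∀ m : M, b₁ • m = b₂ • m) → b₁ = b₂ := by
    intro b₁ b₂ h
    obtain ⟨b, -, hu⟩ := hB (lmul b₁ : M →ₗ[Cᵐᵒᵖ] M)
    have h1 : b₁ = b := hu b₁ fun m => rfl
    have h2 : b₂ = b := hu b₂ fun m => h m
    rw [h1, h2]
  -- φ : for each central z in B, the c with z • m = op c • m
  have hφex : ∀ z : Subring.center B, ∃ c : C, ∀ m : M, (z : B) • m = op c • m :=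
    fun z => (hC (lmulc z : M →ₗ[B] M)).exists
  choose φ hφ using hφex
  -- ψ : for each central w in C, the b with op w • m = b • m
  have hψex : ∀ w : Subring.center C, ∃ b : B, ∀ m : M, op (w : C) • m = b • m :=
    fun w => (hB (rmulc w : M →ₗ[Cᵐᵒᵖ] M)).exists
  choose ψ hψ using hψex
  -- centrality of φ z
  have centφ : ∀ z, φ z ∈ Subring.center C := by
    intro z
    rw [Subring.mem_center_iff]
    intro g
    apply faithC
    intro m
    rw [op_mul, op_mul, mul_smul, mul_smul, ← hφ z m, ← smul_comm ((z : B)) (op g) m, hφ z]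
  have centψ : ∀ w, ψ w ∈ Subring.center B := by
    intro w
    rw [Subring.mem_center_iff]
    intro g
    apply faithB
    intro m
    rw [mul_smul, mul_smul, ← hψ w m, smul_comm g (op (w : C)) m, hψ w]
  refine ⟨⟨⟨fun z => ⟨φ z, centφ z⟩, fun w => ⟨ψ w, centψ w⟩, ?_, ?_⟩, ?_, ?_⟩, ?_, ?_⟩
  · -- left inverse
    intro z
    apply Subtype.ext
    apply faithB
    intro m
    rw [← hψ ⟨φ z, centφ z⟩ m]
    exact (hφ z m).symm
  · -- right inverse
    intro w
    apply Subtype.ext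
    apply faithC
    intro m
    rw [← hφ ⟨ψ w, centψ w⟩ m]
    exact (hψ w m).symm
  · -- multiplicative
    intro z₁ z₂
    apply Subtype.ext
    apply faithC
    intro m
    show op (φ (z₁ * z₂)) • m = op (φ z₁ * φ z₂) • m
    rw [← hφ (z₁ * z₂) m, op_mul, mul_smul, ← hφ z₁ m, ← smul_comm ((z₁ : B)) (op (φ z₂)) m,
      ← hφ z₂ m, Subring.coe_mul, mul_smul]
  · -- additive
    intro z₁ z₂
    apply Subtype.ext
    apply faithC
    intro m
    show op (φ (z₁ + z₂)) • m = op (φ z₁ + φ z₂) • m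
    rw [← hφ (z₁ + z₂) m, op_add, add_smul, ← hφ z₁ m, ← hφ z₂ m, Subring.coe_add, add_smul]
  · -- property
    intro z m
    exact hφ z m
  · -- uniqueness
    intro z c _ h
    apply faithC
    intro m
    rw [← h m]
    exact hφ z m
end

section
/- Let k be a field and let the graded algebra A with triangular decomposition A = B̄ ⊗ H ⊗ B (as above) act on standard modules Δ(E) = A ⊗_{BH} E. Suppose ∂ = ∂' − ∂₀ with ∂₀ central in H acting on a simple H-module E by the scalar c_E, and ∂' ∈ B̄ ⊗ H ⊗ B_{<0} annihilating lowest weight vectors. If Ext¹_{category O}(Δ(E), Δ(F)) ≠ 0 for simple H-modules E, F, then c_F − c_E is a positive integer. -/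
/-!
Suppose `c_F − c_E` is not a positive integer; we split `0 → Δ(F) → X → Δ(E) → 0`.
The generators `j_F F` of `Δ(F)` are killed by `∂'`, so `∂` acts on them by `−c_F`; since
`Δ(F) = B̄ · j_F F` and `B̄` has non-negative degrees, `Δ(F)` is spanned by `∂`-eigenvectors of
eigenvalues `−c_F + n`, `n ∈ ℕ`.

Let `x ∈ X` lift `j_E e` with `(∂ + c_E)² x = 0`. For `b ∈ B` of degree `j < 0`, `b x` lies
in `Δ(F)` (as `b` kills `j_E e`) and is a generalised eigenvector of eigenvalue `−c_E + j`, which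
is not a weight of `Δ(F)`; hence `b x = 0`. So `∂' x = 0`, and `∂ + c_E` acts on `x` as the
central element `c_E − ∂₀` of the semisimple algebra `H`, which forces `(∂ + c_E) x = 0`. Such
lifts exist because `Δ(F) = (∂ + c_E) Δ(F) + ker (∂ + c_E)`. As `E` is a projective `H`-module,
they can be chosen `H`-linearly in `e`; being killed by the negative part of `B`, the resulting
map is `BH`-linear, and the universal property of `Δ(E)` turns it into a section of `X → Δ(E)`.
-/

universe u v

namespace Module.End

variable {K V : Type*} [Field K] [AddCommGroup V] [Module K V]

theorem eq_zero_of_mem_iSup_eigenspace_of_mem_genEigenspace {ι : Type*} {f : End K V}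
    {ν : ι → K} {μ : K} (hμ : ∀ i, ν i ≠ μ) {x : V} (hx : x ∈ ⨆ i, f.eigenspace (ν i))
    {n : ℕ∞} (hxμ : x ∈ f.genEigenspace μ n) : x = 0 := by
  have hdisj := (f.independent_genEigenspace ⊤).disjoint_biSup (y := {ν | ν ≠ μ}) (x := μ)
    (fun h => h rfl)
  refine hdisj.le_bot ⟨(f.genEigenspace μ).mono le_top hxμ, ?_⟩
  have hle : ⨆ i, f.eigenspace (ν i) ≤ ⨆ ν ∈ {ν | ν ≠ μ}, f.genEigenspace ν ⊤ := iSup_le fun i =>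
    (eigenspace_le_genEigenspace zero_lt_one).trans (((f.genEigenspace (ν i)).mono le_top).trans
      (le_biSup (fun ν => f.genEigenspace ν ⊤) (hμ i)))
  exact hle hx

theorem eigenspace_le_range_sup_ker (f : End K V) (ν μ : K) :
    f.eigenspace ν ≤ LinearMap.range (f - μ • 1) ⊔ LinearMap.ker (f - μ • 1) := by
  intro x hx
  rw [mem_eigenspace_iff] at hx
  by_cases hνμ : ν = μ
  · subst hνμ
    exact Submodule.mem_sup_right (by simp [hx])
  · refine Submodule.mem_sup_left ⟨(ν - μ)⁻¹ • x, ?_⟩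
    rw [map_smul, LinearMap.sub_apply, hx, LinearMap.smul_apply, Module.End.one_apply, ← sub_smul,
      smul_smul, inv_mul_cancel₀ (sub_ne_zero.mpr hνμ), one_smul]

end Module.End

theorem IsSemisimpleRing.exists_mul_mul_eq {R : Type*} [Ring R] [IsSemisimpleRing R] (n : R) :
    ∃ b, n * b * n = n := by
  obtain ⟨e, he, hspan⟩ := IsSemisimpleRing.ideal_eq_span_idempotent (Ideal.span {n})
  obtain ⟨r, hr⟩ := Ideal.mem_span_singleton'.mp (hspan ▸ Ideal.mem_span_singleton_self n)
  obtain ⟨b, hb⟩ := Ideal.mem_span_singleton'.mp (hspan ▸ Ideal.mem_span_singleton_self e)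
  refine ⟨b, ?_⟩
  calc n * b * n = n * e := by rw [mul_assoc, hb]
    _ = n := by rw [← hr, mul_assoc, he.eq]

theorem IsSemisimpleRing.smul_eq_zero_of_mul_self_smul_eq_zero {R M : Type*} [Ring R]
    [IsSemisimpleRing R] [AddCommGroup M] [Module R M] {n : R} (hn : ∀ m, Commute n m) {x : M}
    (hx : (n * n) • x = 0) : n • x = 0 := by
  obtain ⟨b, hb⟩ := IsSemisimpleRing.exists_mul_mul_eq n
  rw [← hb, (hn b).eq, mul_assoc, mul_smul, hx, smul_zero]

theorem Module.Projective.exists_comp_eq_of_range_le {R P M N : Type*} [Ring R] [AddCommGroup P]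
    [Module R P] [Module.Projective R P] [AddCommGroup M] [Module R M] [AddCommGroup N]
    [Module R N] (g : M →ₗ[R] N) (j : P →ₗ[R] N) (h : LinearMap.range j ≤ LinearMap.range g) :
    ∃ φ : P →ₗ[R] M, g ∘ₗ φ = j := by
  obtain ⟨φ, hφ⟩ := Module.projective_lifting_property g.rangeRestrict
    (j.codRestrict _ fun p => h ⟨p, rfl⟩) g.surjective_rangeRestrict
  exact ⟨φ, LinearMap.ext fun p => congrArg Subtype.val (LinearMap.congr_fun hφ p)⟩

theorem sub_algebraMap_add_mul_eq_mul_sub {k A : Type*} [CommRing k] [Ring A] [Algebra k A]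
    {d a : A} {i : ℤ} (h : d * a - a * d = i • a) (μ : k) :
    (d - algebraMap k A (μ + i)) * a = a * (d - algebraMap k A μ) := by
  rw [map_add, map_intCast, sub_mul, mul_sub, add_mul, ← Algebra.commutes μ a, ← zsmul_eq_mul,
    ← h]
  abel

section Weights

variable {k A M : Type*} [Field k] [Ring A] [Algebra k A] [AddCommGroup M] [Module A M]
  [Module k M] [IsScalarTower k A M]

theorem mem_eigenspace_lsmul_iff {d : A} {μ : k} {v : M} :
    v ∈ (Algebra.lsmul k k M d).eigenspace μ ↔ (d - algebraMap k A μ) • v = 0 := by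
  rw [Module.End.mem_eigenspace_iff, Algebra.lsmul_apply, sub_smul, algebraMap_smul, sub_eq_zero]

theorem lsmul_sub_algebraMap (d : A) (μ : k) :
    Algebra.lsmul k k M (d - algebraMap k A μ) = Algebra.lsmul k k M d - μ • 1 := by
  rw [map_sub, AlgHom.commutes, Algebra.algebraMap_eq_smul_one]

theorem smul_mem_eigenspace_lsmul {d a : A} {i : ℤ} (h : d * a - a * d = i • a) {μ : k} {v : M}
    (hv : v ∈ (Algebra.lsmul k k M d).eigenspace μ) :
    a • v ∈ (Algebra.lsmul k k M d).eigenspace (μ + i) := by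
  rw [mem_eigenspace_lsmul_iff] at hv ⊢
  rw [← mul_smul, sub_algebraMap_add_mul_eq_mul_sub h, mul_smul, hv, smul_zero]

theorem smul_mem_iSup_eigenspace_lsmul (𝒜 : ℤ → Submodule k A) [GradedAlgebra 𝒜] {d : A}
    (hd : ∀ (i : ℤ) (a : A), a ∈ 𝒜 i → d * a - a * d = i • a) {a : A}
    (ha : ∀ i < 0, (DirectSum.decompose 𝒜 a i : A) = 0) {μ : k} {v : M}
    (hv : v ∈ (Algebra.lsmul k k M d).eigenspace μ) :
    a • v ∈ ⨆ n : ℕ, (Algebra.lsmul k k M d).eigenspace (μ + n) := by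
  classical
  rw [← DirectSum.sum_support_decompose 𝒜 a, Finset.sum_smul]
  refine Submodule.sum_mem _ fun i _ => ?_
  rcases lt_or_ge i 0 with hi | hi
  · rw [ha i hi, zero_smul]
    exact zero_mem _
  · obtain ⟨n, rfl⟩ := Int.eq_ofNat_of_zero_le hi
    have := smul_mem_eigenspace_lsmul (hd _ _ (DirectSum.decompose 𝒜 a n).2) hv
    rw [Int.cast_natCast] at this
    exact Submodule.mem_iSup_of_mem n this

theorem eq_zero_of_sub_algebraMap_mul_self_smul_eq_zero {ι : Type*} {d : A} {ν : ι → k}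
    (hM : ∀ y : M, y ∈ ⨆ i, (Algebra.lsmul k k M d).eigenspace (ν i)) {μ : k} (hμ : ∀ i, ν i ≠ μ)
    {u : M} (hu : ((d - algebraMap k A μ) * (d - algebraMap k A μ)) • u = 0) : u = 0 := by
  refine Module.End.eq_zero_of_mem_iSup_eigenspace_of_mem_genEigenspace hμ (hM u) (n := 2) ?_
  rw [← Nat.cast_ofNat, Module.End.mem_genEigenspace_nat, LinearMap.mem_ker, ← lsmul_sub_algebraMap,
    pow_two, ← map_mul, Algebra.lsmul_apply, hu]

theorem exists_eq_sub_algebraMap_smul_add {ι : Type*} {d : A} {ν : ι → k}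
    (hM : ∀ y : M, y ∈ ⨆ i, (Algebra.lsmul k k M d).eigenspace (ν i)) (μ : k) (w : M) :
    ∃ v w₀, w = (d - algebraMap k A μ) • v + w₀ ∧ (d - algebraMap k A μ) • w₀ = 0 := by
  have hle := iSup_le fun i => (Algebra.lsmul k k M d).eigenspace_le_range_sup_ker (ν i) μ
  obtain ⟨_, ⟨v, rfl⟩, w₀, hw₀, hw⟩ := Submodule.mem_sup.mp (hle (hM w))
  rw [← lsmul_sub_algebraMap] at hw₀
  exact ⟨v, w₀, by rw [← hw, ← lsmul_sub_algebraMap]; rfl, hw₀⟩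

end Weights

section Augmentation

variable {k A : Type*} [CommRing k] [Ring A] [Algebra k A] (𝒜 : ℤ → Submodule k A)
  [GradedAlgebra 𝒜] (B : Subalgebra k A)

def augmentationIdeal : Submodule k A :=
  B.toSubmodule ⊓ LinearMap.ker (GradedAlgebra.proj 𝒜 0)

variable {𝒜 B}

theorem mem_augmentationIdeal {b : A} :
    b ∈ augmentationIdeal 𝒜 B ↔ b ∈ B ∧ (DirectSum.decompose 𝒜 b 0 : A) = 0 :=
  Iff.rfl

theorem inf_iSup_neg_le_augmentationIdeal :
    B.toSubmodule ⊓ ⨆ i : {j : ℤ // j < 0}, 𝒜 i ≤ augmentationIdeal 𝒜 B := by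
  refine inf_le_inf_left _ (iSup_le fun i a ha => ?_)
  exact DirectSum.decompose_of_mem_ne 𝒜 ha i.2.ne

theorem exists_sub_algebraMap_mem_augmentationIdeal
    (hBgraded : ∀ x ∈ B, ∀ i : ℤ, ((DirectSum.decompose 𝒜 x) i : A) ∈ B)
    (hB0 : B.toSubmodule ⊓ 𝒜 0 = Submodule.span k {(1 : A)}) {b : A} (hb : b ∈ B) :
    ∃ c : k, b - algebraMap k A c ∈ augmentationIdeal 𝒜 B := by
  have hb0 : (DirectSum.decompose 𝒜 b 0 : A) ∈ B.toSubmodule ⊓ 𝒜 0 :=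
    ⟨hBgraded b hb 0, SetLike.coe_mem _⟩
  rw [hB0] at hb0
  obtain ⟨c, hc⟩ := Submodule.mem_span_singleton.mp hb0
  rw [← Algebra.algebraMap_eq_smul_one] at hc
  refine ⟨c, sub_mem hb (B.algebraMap_mem c), ?_⟩
  change GradedAlgebra.proj 𝒜 0 (b - algebraMap k A c) = 0
  rw [map_sub, GradedAlgebra.proj_apply, GradedAlgebra.proj_apply,
    DirectSum.decompose_of_mem_same 𝒜 (SetLike.algebraMap_mem_graded 𝒜 c), hc, sub_self]

variable {M : Type*} [AddCommGroup M] [Module A M]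

theorem smul_eq_zero_of_mem_augmentationIdeal
    (hBgraded : ∀ x ∈ B, ∀ i : ℤ, ((DirectSum.decompose 𝒜 x) i : A) ∈ B)
    (hBneg : ∀ x ∈ B, ∀ i : ℤ, 0 < i → ((DirectSum.decompose 𝒜 x) i : A) = 0) {x : M}
    (hx : ∀ j < 0, ∀ b ∈ B, b ∈ 𝒜 j → b • x = 0) {b : A} (hb : b ∈ augmentationIdeal 𝒜 B) :
    b • x = 0 := by
  classical
  rw [← DirectSum.sum_support_decompose 𝒜 b, Finset.sum_smul]
  refine Finset.sum_eq_zero fun j _ => ?_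
  rcases lt_trichotomy j 0 with hj | rfl | hj
  · exact hx j hj _ (hBgraded b hb.1 j) (SetLike.coe_mem _)
  · rw [(mem_augmentationIdeal.mp hb).2, zero_smul]
  · rw [hBneg b hb.1 j hj, zero_smul]

theorem smul_eq_zero_of_mem_mul_inf_iSup_neg {P : Submodule k A} {d : A}
    (hd : d ∈ P * (B.toSubmodule ⊓ ⨆ i : {j : ℤ // j < 0}, 𝒜 i)) {x : M}
    (hx : ∀ b ∈ augmentationIdeal 𝒜 B, b • x = 0) : d • x = 0 := by
  refine Submodule.mul_induction_on hd (fun p _ b hb => ?_) fun _ _ h h' => by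
    rw [add_smul, h, h', add_zero]
  rw [mul_smul, hx b (inf_iSup_neg_le_augmentationIdeal hb), smul_zero]

end Augmentation

section Extension

variable {A M N P : Type*} [Ring A] [AddCommGroup M] [Module A M] [AddCommGroup N] [Module A N]
  [AddCommGroup P] [Module A P] (f : M →ₗ[A] N) (g : N →ₗ[A] P)

theorem smul_eq_zero_of_range_eq_ker (hf : Function.Injective f)
    (hfg : LinearMap.range f = LinearMap.ker g) {s t b : A} (hb : t * b = b * s)
    (hM : ∀ u : M, (t * t) • u = 0 → u = 0) {x : N} (hx : (s * s) • x = 0) (hbx : b • g x = 0) :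
    b • x = 0 := by
  obtain ⟨u, hu⟩ : b • x ∈ LinearMap.range f := hfg ▸ by rwa [LinearMap.mem_ker, map_smul]
  have htu : f ((t * t) • u) = 0 := by
    rw [map_smul, hu, ← mul_smul, mul_assoc, hb, ← mul_assoc, hb, mul_assoc, mul_smul, hx,
      smul_zero]
  rw [← hu, hM u (hf (htu.trans f.map_zero.symm)), map_zero]

theorem exists_mul_self_smul_eq_zero_of_range_eq_ker (hfg : LinearMap.range f = LinearMap.ker g)
    {s : A} (hM : ∀ w : M, ∃ v w₀, w = s • v + w₀ ∧ s • w₀ = 0) {x₀ : N}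
    (hx₀ : s • g x₀ = 0) : ∃ x, g x = g x₀ ∧ (s * s) • x = 0 := by
  obtain ⟨w, hw⟩ : s • x₀ ∈ LinearMap.range f := hfg ▸ by rwa [LinearMap.mem_ker, map_smul]
  obtain ⟨v, w₀, rfl, hw₀⟩ := hM w
  have hgf : ∀ u, g (f u) = 0 := fun u => (hfg ▸ LinearMap.mem_range_self f u : f u ∈ _)
  refine ⟨x₀ - f v, by rw [map_sub, hgf, sub_zero], ?_⟩
  rw [mul_smul, smul_sub, ← hw, ← map_smul, map_add, add_sub_cancel_left, ← map_smul, hw₀,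
    map_zero]

end Extension

def Subalgebra.kerSMul {k A : Type*} [CommRing k] [Ring A] [Algebra k A] (H : Subalgebra k A)
    (M : Type*) [AddCommGroup M] [Module A M] (s : A) (hs : ∀ η ∈ H, Commute s η) :
    Submodule H M where
  carrier := {x | s • x = 0}
  add_mem' {x y} hx hy := show s • (x + y) = 0 by rw [smul_add, hx, hy, add_zero]
  zero_mem' := smul_zero s
  smul_mem' η x hx := show s • ((η : A) • x) = 0 by
    rw [← mul_smul, (hs η η.2).eq, mul_smul, hx, smul_zero]

theorem sub_algebraMap_smul_eq_zero_of_mul_self {k A X : Type*} [CommRing k] [Ring A]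
    [Algebra k A] {H : Subalgebra k A} [IsSemisimpleRing H] [AddCommGroup X] [Module A X]
    {d d' d₀ : A} (hd : d = d' - d₀) (hd₀H : d₀ ∈ H) (hd₀ : ∀ h ∈ H, d₀ * h = h * d₀)
    (hdd₀ : Commute d d₀) {x : X} (hx : d' • x = 0) (μ : k)
    (hs : ((d - algebraMap k A μ) * (d - algebraMap k A μ)) • x = 0) :
    (d - algebraMap k A μ) • x = 0 := by
  set n : H := -(⟨d₀, hd₀H⟩ + algebraMap k H μ)
  have hnA : ((n : H) : A) = -(d₀ + algebraMap k A μ) := rfl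
  have hn : (d - algebraMap k A μ) • x = n • x := by
    rw [Subalgebra.smul_def, hnA, hd, neg_add, sub_smul, sub_smul, hx, add_smul, neg_smul,
      neg_smul, zero_sub, sub_eq_add_neg]
  have hsn : Commute (d - algebraMap k A μ) (n : A) := hnA ▸
    ((hdd₀.add_right (Algebra.commute_algebraMap_right μ d)).neg_right).sub_left
      (Algebra.commute_algebraMap_left μ _)
  have hcentral : ∀ m : H, Commute n m := fun m => Subtype.ext <| show (n : A) * m = m * n by
    rw [hnA, neg_mul, mul_neg, add_mul, mul_add, hd₀ m m.2, Algebra.commutes]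
  have hnn : (n * n) • x = 0 :=
    calc (n * n) • x = ((n : A) * (d - algebraMap k A μ)) • x := by
          rw [mul_smul, ← hn, mul_smul]; rfl
      _ = ((d - algebraMap k A μ) * (d - algebraMap k A μ)) • x := by
          rw [← hsn.eq, mul_smul, mul_smul, hn]; rfl
      _ = 0 := hs
  rw [hn, IsSemisimpleRing.smul_eq_zero_of_mul_self_smul_eq_zero hcentral hnn]

section StandardModule

variable {k A : Type*} [CommRing k] [Ring A] [Algebra k A] {𝒜 : ℤ → Submodule k A}
  [GradedAlgebra 𝒜] {B S H : Subalgebra k A} {π : S →ₐ[k] H} {E : Type*} [AddCommGroup E]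
  [Module H E] {D : Type v} [AddCommGroup D] [Module A D]

theorem map_smul_of_compat (hHle : H ≤ S)
    (hπH : ∀ (x : A) (hx : x ∈ H), ((π ⟨x, hHle hx⟩ : H) : A) = x) {j : E →+ D}
    (hj : ∀ (s : S) (e : E), j (π s • e) = (s : A) • j e) (η : H) (e : E) :
    j (η • e) = (η : A) • j e := by
  rw [← hj ⟨η, hHle η.2⟩, show π ⟨η, hHle η.2⟩ = η from Subtype.ext (hπH η η.2)]

def linearMapOfCompat (hHle : H ≤ S)
    (hπH : ∀ (x : A) (hx : x ∈ H), ((π ⟨x, hHle hx⟩ : H) : A) = x) (j : E →+ D)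
    (hj : ∀ (s : S) (e : E), j (π s • e) = (s : A) • j e) : E →ₗ[H] D where
  toFun := j
  map_add' := map_add j
  map_smul' := map_smul_of_compat hHle hπH hj

theorem span_range_eq_top_of_existsUnique {j : E →+ D}
    (huniv : ∀ (N : ModuleCat.{v} A) (g : E →+ N),
      (∀ (s : S) (e : E), g (π s • e) = (s : A) • g e) →
      ∃! G : D →ₗ[A] N, ∀ e, G (j e) = g e) :
    Submodule.span A (Set.range j) = ⊤ := by
  set p := Submodule.span A (Set.range j)
  have h := (huniv (ModuleCat.of A (D ⧸ p)) 0 fun _ _ => by simp).unique (y₁ := p.mkQ) (y₂ := 0)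
    (fun e => (Submodule.Quotient.mk_eq_zero p).mpr (Submodule.subset_span ⟨e, rfl⟩))
    (fun _ => rfl)
  rw [← p.ker_mkQ, h, LinearMap.ker_zero]

theorem smul_eq_zero_of_mem_augmentationIdeal_of_compat (hBle : B ≤ S)
    (hπB : ∀ (x : A) (hx : x ∈ B), ((DirectSum.decompose 𝒜 x) 0 : A) = 0 → π ⟨x, hBle hx⟩ = 0)
    {j : E →+ D} (hj : ∀ (s : S) (e : E), j (π s • e) = (s : A) • j e) (e : E) {b : A}
    (hb : b ∈ augmentationIdeal 𝒜 B) : b • j e = 0 := by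
  rw [← hj ⟨b, hBle hb.1⟩, hπB b hb.1 hb.2, zero_smul, map_zero]

theorem sub_algebraMap_smul_eq_zero_of_compat [Module k E] [IsScalarTower k H E] (hHle : H ≤ S)
    (hπH : ∀ (x : A) (hx : x ∈ H), ((π ⟨x, hHle hx⟩ : H) : A) = x) (hBle : B ≤ S)
    (hπB : ∀ (x : A) (hx : x ∈ B), ((DirectSum.decompose 𝒜 x) 0 : A) = 0 → π ⟨x, hBle hx⟩ = 0)
    {j : E →+ D} (hj : ∀ (s : S) (e : E), j (π s • e) = (s : A) • j e) {d d' d₀ : A}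
    (hd : d = d' - d₀) {P : Submodule k A}
    (hd' : d' ∈ P * (B.toSubmodule ⊓ ⨆ i : {j : ℤ // j < 0}, 𝒜 i)) (hd₀ : d₀ ∈ H) {c : k}
    (hc : ∀ e : E, (⟨d₀, hd₀⟩ : H) • e = c • e) (e : E) :
    (d - algebraMap k A (-c)) • j e = 0 := by
  have hd'e : d' • j e = 0 := smul_eq_zero_of_mem_mul_inf_iSup_neg hd' fun _ =>
    smul_eq_zero_of_mem_augmentationIdeal_of_compat hBle hπB hj e
  have hd₀e : d₀ • j e = algebraMap k A c • j e := by
    rw [← map_smul_of_compat hHle hπH hj ⟨d₀, hd₀⟩, hc, ← algebraMap_smul H c e,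
      map_smul_of_compat hHle hπH hj]
    rfl
  rw [hd, map_neg, sub_neg_eq_add, add_smul, sub_smul, hd'e, hd₀e, zero_sub, neg_add_cancel]

/-- By `hB0` every `b ∈ B` is `c + b₋` with `c ∈ k` and `b₋ ∈ augmentationIdeal 𝒜 B`, and then
`π b = c`. -/
theorem map_smul_of_forall_augmentationIdeal
    (hSBH : S.toSubmodule = B.toSubmodule * H.toSubmodule) (hHle : H ≤ S)
    (hπH : ∀ (x : A) (hx : x ∈ H), ((π ⟨x, hHle hx⟩ : H) : A) = x) (hBle : B ≤ S)
    (hπB : ∀ (x : A) (hx : x ∈ B), ((DirectSum.decompose 𝒜 x) 0 : A) = 0 → π ⟨x, hBle hx⟩ = 0)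
    (hBgraded : ∀ x ∈ B, ∀ i : ℤ, ((DirectSum.decompose 𝒜 x) i : A) ∈ B)
    (hB0 : B.toSubmodule ⊓ 𝒜 0 = Submodule.span k {(1 : A)}) (φ : E →ₗ[H] D)
    (hφ : ∀ e, ∀ b ∈ augmentationIdeal 𝒜 B, b • φ e = 0) (s : S) (e : E) :
    φ (π s • e) = (s : A) • φ e := by
  have hB : ∀ (b : A) (hb : b ∈ B) (y : E), φ (π ⟨b, hBle hb⟩ • y) = b • φ y := by
    intro b hb y
    obtain ⟨c, hc⟩ := exists_sub_algebraMap_mem_augmentationIdeal hBgraded hB0 hb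
    have hπb : π ⟨b, hBle hb⟩ = algebraMap k H c := by
      rw [← sub_eq_zero, ← AlgHom.commutes π c, ← map_sub]
      exact hπB _ hc.1 hc.2
    rw [hπb, map_smul, ← sub_add_cancel b (algebraMap k A c), add_smul, hφ y _ hc, zero_add]
    rfl
  obtain ⟨s, hs⟩ := s
  have hs' : s ∈ B.toSubmodule * H.toSubmodule := hSBH ▸ hs
  induction hs' using Submodule.mul_induction_on' generalizing e with
  | mem_mul_mem b hb η hη =>
    rw [show (⟨b * η, hs⟩ : S) = ⟨b, hBle hb⟩ * ⟨η, hHle hη⟩ from rfl, map_mul, mul_smul, hB b hb,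
      show π ⟨η, hHle hη⟩ = ⟨η, hη⟩ from Subtype.ext (hπH η hη), map_smul]
    exact (mul_smul b η (φ e)).symm
  | add x hx y hy ihx ihy =>
    have hxS : x ∈ S := by rw [← Subalgebra.mem_toSubmodule, hSBH]; exact hx
    have hyS : y ∈ S := by rw [← Subalgebra.mem_toSubmodule, hSBH]; exact hy
    rw [show (⟨x + y, hs⟩ : S) = ⟨x, hxS⟩ + ⟨y, hyS⟩ from rfl, map_add, add_smul, map_add,
      ihx e hxS, ihy e hyS]
    exact (add_smul x y (φ e)).symm

theorem smul_eq_zero_of_mem_augmentationIdeal_of_range_eq_ker {d : A}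
    (hd : ∀ (i : ℤ) (a : A), a ∈ 𝒜 i → d * a - a * d = i • a)
    (hBgraded : ∀ x ∈ B, ∀ i : ℤ, ((DirectSum.decompose 𝒜 x) i : A) ∈ B)
    (hBneg : ∀ x ∈ B, ∀ i : ℤ, 0 < i → ((DirectSum.decompose 𝒜 x) i : A) = 0) (hBle : B ≤ S)
    (hπB : ∀ (x : A) (hx : x ∈ B), ((DirectSum.decompose 𝒜 x) 0 : A) = 0 → π ⟨x, hBle hx⟩ = 0)
    {M N : Type*} [AddCommGroup M] [Module A M] [AddCommGroup N] [Module A N] {j : E →+ D}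
    (hj : ∀ (s : S) (e : E), j (π s • e) = (s : A) • j e) (f : M →ₗ[A] N) (g : N →ₗ[A] D)
    (hf : Function.Injective f) (hfg : LinearMap.range f = LinearMap.ker g) {μ : k}
    (hM : ∀ i : ℤ, i < 0 → ∀ u : M,
      ((d - algebraMap k A (μ + i)) * (d - algebraMap k A (μ + i))) • u = 0 → u = 0)
    {x : N} {e : E} (hx : g x = j e)
    (hsx : ((d - algebraMap k A μ) * (d - algebraMap k A μ)) • x = 0)
    {b : A} (hb : b ∈ augmentationIdeal 𝒜 B) : b • x = 0 := by
  refine smul_eq_zero_of_mem_augmentationIdeal hBgraded hBneg (fun i hi b' hb'B hb'i => ?_) hb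
  refine smul_eq_zero_of_range_eq_ker f g hf hfg
    (sub_algebraMap_add_mul_eq_mul_sub (hd i b' hb'i) μ) (hM i hi) hsx ?_
  rw [hx]
  exact smul_eq_zero_of_mem_augmentationIdeal_of_compat hBle hπB hj e
    ⟨hb'B, DirectSum.decompose_of_mem_ne 𝒜 hb'i hi.ne⟩

theorem exists_comp_eq_id_of_forall_exists_lift [IsSemisimpleRing H]
    (hSBH : S.toSubmodule = B.toSubmodule * H.toSubmodule) (hHle : H ≤ S)
    (hπH : ∀ (x : A) (hx : x ∈ H), ((π ⟨x, hHle hx⟩ : H) : A) = x) (hBle : B ≤ S)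
    (hπB : ∀ (x : A) (hx : x ∈ B), ((DirectSum.decompose 𝒜 x) 0 : A) = 0 → π ⟨x, hBle hx⟩ = 0)
    (hBgraded : ∀ x ∈ B, ∀ i : ℤ, ((DirectSum.decompose 𝒜 x) i : A) ∈ B)
    (hB0 : B.toSubmodule ⊓ 𝒜 0 = Submodule.span k {(1 : A)}) {X : Type v} [AddCommGroup X]
    [Module A X] {j : E →+ D} (hj : ∀ (s : S) (e : E), j (π s • e) = (s : A) • j e)
    (huniv : ∀ (N : ModuleCat.{v} A) (g : E →+ N),
      (∀ (s : S) (e : E), g (π s • e) = (s : A) • g e) → ∃! G : D →ₗ[A] N, ∀ e, G (j e) = g e)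
    (g : X →ₗ[A] D) {s : A} (hs : ∀ η ∈ H, Commute s η)
    (hlift : ∀ e, ∃ x, g x = j e ∧ s • x = 0)
    (hkill : ∀ x e, g x = j e → s • x = 0 → ∀ b ∈ augmentationIdeal 𝒜 B, b • x = 0) :
    ∃ G : D →ₗ[A] X, g ∘ₗ G = LinearMap.id := by
  have := Module.projective_of_isSemisimpleRing H E
  let K := H.kerSMul X s hs
  obtain ⟨φ, hφ⟩ := Module.Projective.exists_comp_eq_of_range_le
      ((g.restrictScalars H).comp K.subtype) (linearMapOfCompat hHle hπH j hj) <| by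
    rintro _ ⟨e, rfl⟩
    obtain ⟨x, hx, hsx⟩ := hlift e
    exact ⟨⟨x, hsx⟩, hx⟩
  have hgφ : ∀ e, g (φ e) = j e := LinearMap.congr_fun hφ
  obtain ⟨G, hG, -⟩ := huniv (ModuleCat.of A X) (K.subtype ∘ₗ φ).toAddMonoidHom <|
    map_smul_of_forall_augmentationIdeal hSBH hHle hπH hBle hπB hBgraded hB0 (K.subtype ∘ₗ φ)
      fun e => hkill (φ e) e (hgφ e) (φ e).2
  exact ⟨G, LinearMap.ext_on_range (span_range_eq_top_of_existsUnique huniv) fun e => by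
    simp [hG, hgφ]⟩

end StandardModule

theorem mem_iSup_eigenspace_of_compat {k A : Type*} [Field k] [Ring A] [Algebra k A]
    (𝒜 : ℤ → Submodule k A) [GradedAlgebra 𝒜] {B Bb S H : Subalgebra k A} {π : S →ₐ[k] H}
    {E : Type*} [AddCommGroup E] [Module H E] {D : Type*} [AddCommGroup D] [Module A D]
    [Module k D] [IsScalarTower k A D] {d : A}
    (hd : ∀ (i : ℤ) (a : A), a ∈ 𝒜 i → d * a - a * d = i • a)
    (hBbpos : ∀ x ∈ Bb, ∀ i : ℤ, i < 0 → ((DirectSum.decompose 𝒜 x) i : A) = 0)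
    (htop : Bb.toSubmodule * H.toSubmodule * B.toSubmodule = ⊤) (hHle : H ≤ S)
    (hπH : ∀ (x : A) (hx : x ∈ H), ((π ⟨x, hHle hx⟩ : H) : A) = x) (hBle : B ≤ S) {j : E →+ D}
    (hj : ∀ (s : S) (e : E), j (π s • e) = (s : A) • j e)
    (hspan : Submodule.span A (Set.range j) = ⊤) {μ : k}
    (hlow : ∀ e, j e ∈ (Algebra.lsmul k k D d).eigenspace μ) (y : D) :
    y ∈ ⨆ n : ℕ, (Algebra.lsmul k k D d).eigenspace (μ + n) := by
  have hBbH : ∀ m ∈ Bb.toSubmodule * H.toSubmodule, ∀ e,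
      m • j e ∈ ⨆ n : ℕ, (Algebra.lsmul k k D d).eigenspace (μ + n) := by
    intro m hm
    induction hm using Submodule.mul_induction_on' with
    | mem_mul_mem b hb η hη =>
      intro e
      rw [mul_smul, ← map_smul_of_compat hHle hπH hj ⟨η, hη⟩]
      exact smul_mem_iSup_eigenspace_lsmul 𝒜 hd (hBbpos b hb) (hlow _)
    | add x _ y _ hx hy => exact fun e => by rw [add_smul]; exact add_mem (hx e) (hy e)
  have hA : ∀ (a : A) (e : E), a • j e ∈ ⨆ n : ℕ, (Algebra.lsmul k k D d).eigenspace (μ + n) := by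
    intro a
    have ha : a ∈ Bb.toSubmodule * H.toSubmodule * B.toSubmodule := htop ▸ Submodule.mem_top
    induction ha using Submodule.mul_induction_on' with
    | mem_mul_mem m hm b hb =>
      intro e
      rw [mul_smul, show b • j e = j (π ⟨b, hBle hb⟩ • e) from (hj ⟨b, hBle hb⟩ e).symm]
      exact hBbH m hm _
    | add x _ y _ hx hy => exact fun e => by rw [add_smul]; exact add_mem (hx e) (hy e)
  obtain ⟨c, rfl⟩ :=
    Finsupp.mem_span_range_iff_exists_finsupp.mp (hspan ▸ Submodule.mem_top (x := y))
  exact Submodule.sum_mem _ fun e _ => hA _ e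

theorem neg_add_natCast_ne_neg_add_intCast {k : Type*} [CommRing k] {a b : k}
    (h : ¬ ∃ n : ℕ, 0 < n ∧ a - b = n) {i : ℤ} (hi : i < 0) (n : ℕ) : -a + n ≠ -b + i := by
  intro hab
  obtain ⟨m, rfl⟩ := Int.eq_negSucc_of_lt_zero hi
  exact h ⟨n + m + 1, by omega, by push_cast [Int.cast_negSucc] at hab ⊢; linear_combination -hab⟩

theorem ext1_delta_delta_implies_positive_integer_general
    (k : Type u) [Field k] (A : Type u) [Ring A] [Algebra k A]
    (𝒜 : ℤ → Submodule k A) [GradedAlgebra 𝒜]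
    (dd dd' dd0 : A)
    (hinner : ∀ (i : ℤ) (a : A), a ∈ 𝒜 i → dd * a - a * dd = i • a)
    (B Bb H : Subalgebra k A)
    (hBgraded : ∀ x ∈ B, ∀ i : ℤ, ((DirectSum.decompose 𝒜 x) i : A) ∈ B)
    (hBneg : ∀ x ∈ B, ∀ i : ℤ, 0 < i → ((DirectSum.decompose 𝒜 x) i : A) = 0)
    (hB0 : B.toSubmodule ⊓ 𝒜 0 = Submodule.span k {(1 : A)})
    (hBbpos : ∀ x ∈ Bb, ∀ i : ℤ, i < 0 → ((DirectSum.decompose 𝒜 x) i : A) = 0)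
    (hH0 : H.toSubmodule ≤ 𝒜 0)
    [IsSemisimpleRing ↥H]
    (htri : Function.Bijective
      ⇑(Submodule.mulMap (Bb.toSubmodule * H.toSubmodule) B.toSubmodule))
    -- ∂ = ∂' − ∂₀, with ∂' ∈ B̄ ⊗ H ⊗ B^{>0} and ∂₀ ∈ Z(H)
    (hddsplit : dd = dd' - dd0)
    (hdd' : dd' ∈ Bb.toSubmodule * H.toSubmodule *
      (B.toSubmodule ⊓ ⨆ i : {j : ℤ // j < 0}, 𝒜 (i : ℤ)))
    (hdd0H : dd0 ∈ H)
    (hdd0central : ∀ h ∈ H, dd0 * h = h * dd0)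
    -- the subalgebra `BH` and its augmentation `π : BH → H`
    (SBH : Subalgebra k A) (hSBH : SBH.toSubmodule = B.toSubmodule * H.toSubmodule)
    (π : ↥SBH →ₐ[k] ↥H) (hHle : H ≤ SBH)
    (hπH : ∀ (x : A) (hx : x ∈ H), ((π ⟨x, hHle hx⟩ : ↥H) : A) = x)
    (hBle : B ≤ SBH)
    (hπB : ∀ (x : A) (hx : x ∈ B), ((DirectSum.decompose 𝒜 x) 0 : A) = 0 →
      π ⟨x, hBle hx⟩ = 0)
    -- simple `H`-modules `E`, `F` on which `∂₀` acts by scalars `c_E`, `c_F`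
    (E : Type u) [AddCommGroup E] [Module ↥H E] [Module k E] [IsScalarTower k ↥H E]
    (F : Type u) [AddCommGroup F] [Module ↥H F] [Module k F] [IsScalarTower k ↥H F]
    (cE cF : k)
    (hcE : ∀ e : E, (⟨dd0, hdd0H⟩ : ↥H) • e = cE • e)
    (hcF : ∀ f : F, (⟨dd0, hdd0H⟩ : ↥H) • f = cF • f)
    -- the standard modules Δ(E) and Δ(F), via their universal properties
    (DE : Type u) [AddCommGroup DE] [Module A DE]
    (jE : E →+ DE)
    (hjE : ∀ (s : ↥SBH) (e : E), jE (π s • e) = (s : A) • jE e)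
    (hDEuniv : ∀ (N : ModuleCat.{u} A) (g : E →+ N),
      (∀ (s : ↥SBH) (e : E), g (π s • e) = (s : A) • g e) →
      ∃! G : DE →ₗ[A] N, ∀ e, G (jE e) = g e)
    (DF : Type u) [AddCommGroup DF] [Module A DF]
    (jF : F →+ DF)
    (hjF : ∀ (s : ↥SBH) (f : F), jF (π s • f) = (s : A) • jF f)
    (hDFuniv : ∀ (N : ModuleCat.{u} A) (g : F →+ N),
      (∀ (s : ↥SBH) (f : F), g (π s • f) = (s : A) • g f) →
      ∃! G : DF →ₗ[A] N, ∀ f, G (jF f) = g f)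
    -- a non-split extension `0 → Δ(F) → X → Δ(E) → 0` (i.e. `Ext¹(Δ(E), Δ(F)) ≠ 0`)
    (X : Type u) [AddCommGroup X] [Module A X]
    (f : DF →ₗ[A] X) (g : X →ₗ[A] DE)
    (hf : Function.Injective f) (hg : Function.Surjective g)
    (hfg : LinearMap.range f = LinearMap.ker g)
    (hnonsplit : ¬ ∃ s : DE →ₗ[A] X, g ∘ₗ s = LinearMap.id) :
    ∃ n : ℕ, 0 < n ∧ cF - cE = (n : k) := by
  by_contra hpos
  refine hnonsplit ?_
  let _ : Module k DF := Module.compHom DF (algebraMap k A)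
  have : IsScalarTower k A DF := ⟨fun c a y => by rw [Algebra.smul_def, mul_smul]; rfl⟩
  have hddH : ∀ η ∈ H, Commute dd η := fun η hη =>
    sub_eq_zero.mp (by rw [hinner 0 η (hH0 hη), zero_smul])
  have hweights : ∀ y : DF, y ∈ ⨆ n : ℕ, (Algebra.lsmul k k DF dd).eigenspace (-cF + n) :=
    mem_iSup_eigenspace_of_compat 𝒜 hinner hBbpos
      (by rw [← Submodule.mulMap_range]; exact LinearMap.range_eq_top.mpr htri.2) hHle hπH hBle hjF
      (span_range_eq_top_of_existsUnique hDFuniv) fun f => mem_eigenspace_lsmul_iff.mpr <|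
        sub_algebraMap_smul_eq_zero_of_compat hHle hπH hBle hπB hjF hddsplit hdd' hdd0H hcF f
  set s := dd - algebraMap k A (-cE)
  have hkill : ∀ x e, g x = jE e → (s * s) • x = 0 → ∀ b ∈ augmentationIdeal 𝒜 B, b • x = 0 :=
    fun x e hx hsx _ => smul_eq_zero_of_mem_augmentationIdeal_of_range_eq_ker hinner hBgraded
      hBneg hBle hπB hjE f g hf hfg (fun i hi _ => eq_zero_of_sub_algebraMap_mul_self_smul_eq_zero
        hweights (neg_add_natCast_ne_neg_add_intCast hpos hi)) hx hsx
  refine exists_comp_eq_id_of_forall_exists_lift hSBH hHle hπH hBle hπB hBgraded hB0 hjE hDEuniv g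
    (fun η hη => (hddH η hη).sub_left (Algebra.commute_algebraMap_left _ _)) (fun e => ?_)
    fun x e hx hsx => hkill x e hx (by rw [mul_smul, hsx, smul_zero])
  obtain ⟨x₀, hx₀⟩ := hg (jE e)
  obtain ⟨x, hgx, hsx⟩ := exists_mul_self_smul_eq_zero_of_range_eq_ker f g hfg
    (exists_eq_sub_algebraMap_smul_add hweights _) (x₀ := x₀) <| hx₀ ▸
      sub_algebraMap_smul_eq_zero_of_compat hHle hπH hBle hπB hjE hddsplit hdd' hdd0H hcE e
  rw [hx₀] at hgx
  exact ⟨x, hgx, sub_algebraMap_smul_eq_zero_of_mul_self hddsplit hdd0H hdd0central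
    (hddH dd0 hdd0H) (smul_eq_zero_of_mem_mul_inf_iSup_neg hdd' (hkill x e hgx hsx)) _ hsx⟩

/-- Let `A = B̄ ⊗ H ⊗ B` be a graded algebra over a field `k` with a
triangular decomposition, inner grading given by `∂ = ∂' − ∂₀` with
`∂' ∈ B̄ ⊗ H ⊗ B^{>0}` and `∂₀` central in `H`, acting on simple `H`-modules `E`, `F`
by scalars `c_E`, `c_F`.  Let `Δ(E) = A ⊗_{BH} E` and `Δ(F)` be the standard modules
(given by their universal properties).  If `Ext¹(Δ(E), Δ(F)) ≠ 0` in category `𝒪`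
(i.e. there is a non-split extension `0 → Δ(F) → X → Δ(E) → 0`), then `c_F − c_E` is
a positive integer. -/
theorem ext1_delta_delta_implies_positive_integer
    (k : Type u) [Field k] (A : Type u) [Ring A] [Algebra k A]
    (𝒜 : ℤ → Submodule k A) [GradedAlgebra 𝒜]
    (dd dd' dd0 : A) (hdd0mem : dd ∈ 𝒜 0)
    (hinner : ∀ (i : ℤ) (a : A), a ∈ 𝒜 i → dd * a - a * dd = i • a)
    (B Bb H : Subalgebra k A)
    (hBgraded : ∀ x ∈ B, ∀ i : ℤ, ((DirectSum.decompose 𝒜 x) i : A) ∈ B)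
    (hBneg : ∀ x ∈ B, ∀ i : ℤ, 0 < i → ((DirectSum.decompose 𝒜 x) i : A) = 0)
    (hB0 : B.toSubmodule ⊓ 𝒜 0 = Submodule.span k {(1 : A)})
    (hBbgraded : ∀ x ∈ Bb, ∀ i : ℤ, ((DirectSum.decompose 𝒜 x) i : A) ∈ Bb)
    (hBbpos : ∀ x ∈ Bb, ∀ i : ℤ, i < 0 → ((DirectSum.decompose 𝒜 x) i : A) = 0)
    (hBb0 : Bb.toSubmodule ⊓ 𝒜 0 = Submodule.span k {(1 : A)})
    (hH0 : H.toSubmodule ≤ 𝒜 0)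
    [FiniteDimensional k ↥H] [IsSemisimpleRing ↥H]
    (hBbH : Function.Injective ⇑(Submodule.mulMap Bb.toSubmodule H.toSubmodule))
    (htri : Function.Bijective
      ⇑(Submodule.mulMap (Bb.toSubmodule * H.toSubmodule) B.toSubmodule))
    (hBH : Function.Injective ⇑(Submodule.mulMap B.toSubmodule H.toSubmodule))
    (hcommBH : B.toSubmodule * H.toSubmodule = H.toSubmodule * B.toSubmodule)
    (hcommBbH : Bb.toSubmodule * H.toSubmodule = H.toSubmodule * Bb.toSubmodule)
    -- ∂ = ∂' − ∂₀, with ∂' ∈ B̄ ⊗ H ⊗ B^{>0} and ∂₀ ∈ Z(H)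
    (hddsplit : dd = dd' - dd0)
    (hdd' : dd' ∈ Bb.toSubmodule * H.toSubmodule *
      (B.toSubmodule ⊓ ⨆ i : {j : ℤ // j < 0}, 𝒜 (i : ℤ)))
    (hdd0H : dd0 ∈ H)
    (hdd0central : ∀ h ∈ H, dd0 * h = h * dd0)
    -- the subalgebra `BH` and its augmentation `π : BH → H`
    (SBH : Subalgebra k A) (hSBH : SBH.toSubmodule = B.toSubmodule * H.toSubmodule)
    (π : ↥SBH →ₐ[k] ↥H) (hHle : H ≤ SBH)
    (hπH : ∀ (x : A) (hx : x ∈ H), ((π ⟨x, hHle hx⟩ : ↥H) : A) = x)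
    (hBle : B ≤ SBH)
    (hπB : ∀ (x : A) (hx : x ∈ B), ((DirectSum.decompose 𝒜 x) 0 : A) = 0 →
      π ⟨x, hBle hx⟩ = 0)
    -- simple `H`-modules `E`, `F` on which `∂₀` acts by scalars `c_E`, `c_F`
    (E : Type u) [AddCommGroup E] [Module ↥H E] [Module k E] [IsScalarTower k ↥H E]
    (F : Type u) [AddCommGroup F] [Module ↥H F] [Module k F] [IsScalarTower k ↥H F]
    (hEsimple : IsSimpleModule ↥H E) (hFsimple : IsSimpleModule ↥H F)
    (cE cF : k)
    (hcE : ∀ e : E, (⟨dd0, hdd0H⟩ : ↥H) • e = cE • e)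
    (hcF : ∀ f : F, (⟨dd0, hdd0H⟩ : ↥H) • f = cF • f)
    -- the standard modules Δ(E) and Δ(F), via their universal properties
    (DE : Type u) [AddCommGroup DE] [Module A DE]
    (jE : E →+ DE)
    (hjE : ∀ (s : ↥SBH) (e : E), jE (π s • e) = (s : A) • jE e)
    (hDEuniv : ∀ (N : ModuleCat.{u} A) (g : E →+ N),
      (∀ (s : ↥SBH) (e : E), g (π s • e) = (s : A) • g e) →
      ∃! G : DE →ₗ[A] N, ∀ e, G (jE e) = g e)
    (DF : Type u) [AddCommGroup DF] [Module A DF]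
    (jF : F →+ DF)
    (hjF : ∀ (s : ↥SBH) (f : F), jF (π s • f) = (s : A) • jF f)
    (hDFuniv : ∀ (N : ModuleCat.{u} A) (g : F →+ N),
      (∀ (s : ↥SBH) (f : F), g (π s • f) = (s : A) • g f) →
      ∃! G : DF →ₗ[A] N, ∀ f, G (jF f) = g f)
    -- a non-split extension `0 → Δ(F) → X → Δ(E) → 0` (i.e. `Ext¹(Δ(E), Δ(F)) ≠ 0`)
    (X : Type u) [AddCommGroup X] [Module A X]
    (f : DF →ₗ[A] X) (g : X →ₗ[A] DE)
    (hf : Function.Injective f) (hg : Function.Surjective g)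
    (hfg : LinearMap.range f = LinearMap.ker g)
    (hnonsplit : ¬ ∃ s : DE →ₗ[A] X, g ∘ₗ s = LinearMap.id) :
    ∃ n : ℕ, 0 < n ∧ cF - cE = (n : k) :=
  ext1_delta_delta_implies_positive_integer_general k A 𝒜 dd dd' dd0 hinner B Bb H hBgraded hBneg
    hB0 hBbpos hH0 htri hddsplit hdd' hdd0H hdd0central SBH hSBH π hHle hπH hBle hπB E F cE cF hcE
    hcF DE jE hjE hDEuniv DF jF hjF hDFuniv X f g hf hg hfg hnonsplit
end
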